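/- With the closest point projection θₙ = argmin_{θ ∈ Φ_K}|θ − Δₙ| (where Δₙ = α₀ − αₙ) and K ≥ 3, the SNR boost satisfies f(θ) = (1/β₀²)|β₀e^{jα₀} + Σₙ βₙe^{j(αₙ+θₙ)}|² ≥ (1/β₀²)(β₀ + cos(π/K)·Σₙ βₙ)². -/

import Mathlib

set_option maxHeartbeats 1000000


open Real Finset

/-- The norm of a real number coerced into `Real.Angle` is at most its absolute value. -/
lemma angle_norm_coe_le (y : ℝ) : ‖((y : ℝ) : Real.Angle)‖ ≤ |y| := by
  have h : ‖((y : ℝ) : Real.Angle)‖ ≤ ‖y‖ := QuotientAddGroup.norm_mk_le_norm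
  rw [← Real.norm_eq_abs]
  exact h

/-- If the angle norm of `y` is at most `c ≤ π`, then `cos y ≥ cos c`. -/
lemma cos_ge_of_angle_norm_le {y c : ℝ} (hcπ : c ≤ π)
    (h : ‖((y : ℝ) : Real.Angle)‖ ≤ c) : Real.cos c ≤ Real.cos y := by
  have hnorm : ‖((y : ℝ) : Real.Angle)‖ = |y - round ((2 * π)⁻¹ * y) * (2 * π)| :=
    AddCircle.norm_eq (p := 2 * π) (x := y)
  rw [hnorm] at h
  set m : ℤ := round ((2 * π)⁻¹ * y) with hm
  have hyc : Real.cos y = Real.cos (y - m * (2 * π)) := by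
    rw [show y - (m : ℝ) * (2 * π) = y + (-m : ℤ) * (2 * π) by push_cast; ring]
    rw [Real.cos_add_int_mul_two_pi]
  rw [hyc, ← Real.cos_abs (y - m * (2 * π))]
  exact Real.cos_le_cos_of_nonneg_of_le_pi (abs_nonneg _) hcπ h

/-- Under closest point projection (`K ≥ 3`), the SNR boost satisfies
`f(θ) ≥ (1/β₀²)(β₀ + cos(π/K)·Σₙ βₙ)²`. -/
theorem cpp_snr_boost_lower_bound (N K : ℕ) (hN : 1 ≤ N) (hK : 3 ≤ K)
    (ω : ℝ) (hω : ω = 2 * π / K)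
    (β : ℕ → ℝ) (hβ : ∀ n ≤ N, 0 < β n)
    (α : ℕ → ℝ) (hα : ∀ n ≤ N, α n ∈ Set.Ico 0 (2 * π))
    (k : ℕ → ℕ) (hk : ∀ n, 1 ≤ n → n ≤ N → k n ∈ Finset.Icc 1 K)
    (hmin : ∀ n, 1 ≤ n → n ≤ N → ∀ k' ∈ Finset.Icc 1 K,
      ‖((k n * ω - (α 0 - α n) : ℝ) : Real.Angle)‖ ≤
        ‖((k' * ω - (α 0 - α n) : ℝ) : Real.Angle)‖) :
    (1 / (β 0) ^ 2) * (β 0 + Real.cos (π / K) * ∑ n ∈ Finset.Icc 1 N, β n) ^ 2 ≤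
      (1 / (β 0) ^ 2) *
        ‖(β 0 : ℂ) * Complex.exp (Complex.I * (α 0 : ℝ)) +
          ∑ n ∈ Finset.Icc 1 N,
            (β n : ℂ) * Complex.exp (Complex.I * ((α n : ℝ) + (k n : ℝ) * ω))‖ ^ 2 := by
  have hKpos : (0 : ℝ) < K := by positivity
  have hωpos : 0 < ω := by rw [hω]; positivity
  have hK3 : (3 : ℝ) ≤ (K : ℝ) := by exact_mod_cast hK
  have hπK_le : π / K ≤ π := by
    rw [div_le_iff₀ hKpos]
    nlinarith [Real.pi_pos]
  have hcos_pos : 0 < Real.cos (π / K) := by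
    apply Real.cos_pos_of_mem_Ioo
    constructor
    · linarith [Real.pi_pos, div_pos Real.pi_pos hKpos]
    · rw [div_lt_div_iff₀ hKpos two_pos]
      nlinarith [Real.pi_pos]
  -- Step 1 : for each n, the angle norm of `k n * ω - (α 0 - α n)` is at most `π / K`
  have key : ∀ n, 1 ≤ n → n ≤ N →
      ‖((k n * ω - (α 0 - α n) : ℝ) : Real.Angle)‖ ≤ π / K := by
    intro n h1 h2
    set x : ℝ := α 0 - α n with hx
    set m : ℤ := round (x / ω) with hmdef
    have hKz : (0 : ℤ) < (K : ℤ) := by exact_mod_cast (by omega : 0 < K)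
    set r : ℤ := m % K with hrdef
    have hr0 : 0 ≤ r := Int.emod_nonneg m (by omega)
    have hrK : r < K := Int.emod_lt_of_pos m hKz
    set k' : ℕ := if r = 0 then K else r.toNat with hk'def
    have hk'mem : k' ∈ Finset.Icc 1 K := by
      rw [Finset.mem_Icc]
      by_cases h : r = 0 <;> simp [hk'def, h] <;> omega
    have hmod : (K : ℤ) ∣ ((k' : ℤ) - m) := by
      have h1' : (K : ℤ) ∣ ((k' : ℤ) - r) := by
        by_cases h : r = 0
        · simp [hk'def, h]
        · simp [hk'def, h, Int.toNat_of_nonneg hr0]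
      have h2' : (K : ℤ) ∣ (m - r) := by
        rw [hrdef]
        exact Int.dvd_self_sub_of_emod_eq rfl
      have := dvd_sub h1' h2'
      simpa using this
    obtain ⟨c, hc⟩ := hmod
    -- the angles `k' * ω - x` and `m * ω - x` coincide
    have hangle : (((k' : ℝ) * ω - x : ℝ) : Real.Angle) = (((m : ℝ) * ω - x : ℝ) : Real.Angle) := by
      rw [Real.Angle.angle_eq_iff_two_pi_dvd_sub]
      refine ⟨c, ?_⟩
      have hKω : (K : ℝ) * ω = 2 * π := by
        rw [hω]; field_simp
      have : ((k' : ℝ) - (m : ℝ)) = (K : ℝ) * (c : ℝ) := by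
        exact_mod_cast congrArg (fun z : ℤ => (z : ℝ)) hc
      calc (k' : ℝ) * ω - x - ((m : ℝ) * ω - x) = ((k' : ℝ) - (m : ℝ)) * ω := by ring
        _ = (K : ℝ) * (c : ℝ) * ω := by rw [this]
        _ = 2 * π * c := by rw [mul_comm ((K:ℝ)) ((c:ℝ)), mul_assoc, hKω]; ring
    have hround : |(m : ℝ) * ω - x| ≤ π / K := by
      have h1' : |x / ω - (m : ℝ)| ≤ 1 / 2 := abs_sub_round (x / ω)
      have h2' : |(m : ℝ) * ω - x| = |x / ω - (m : ℝ)| * ω := by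
        rw [abs_sub_comm, show x - (m : ℝ) * ω = (x / ω - (m : ℝ)) * ω by
          rw [sub_mul, div_mul_cancel₀ _ hωpos.ne'], abs_mul, abs_of_pos hωpos]
      rw [h2']
      calc |x / ω - (m : ℝ)| * ω ≤ (1 / 2) * ω := by
            apply mul_le_mul_of_nonneg_right h1' hωpos.le
        _ = π / K := by rw [hω]; ring
    calc ‖((↑(k n) * ω - x : ℝ) : Real.Angle)‖
        ≤ ‖(((k' : ℕ) * ω - x : ℝ) : Real.Angle)‖ := hmin n h1 h2 k' hk'mem
      _ = ‖(((m : ℝ) * ω - x : ℝ) : Real.Angle)‖ := by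
          rw [show ((k' : ℕ) : ℝ) * ω - x = (k' : ℝ) * ω - x by norm_num, hangle]
      _ ≤ |(m : ℝ) * ω - x| := angle_norm_coe_le _
      _ ≤ π / K := hround
  -- Step 2 : cosine lower bound
  have hcos : ∀ n, 1 ≤ n → n ≤ N →
      Real.cos (π / K) ≤ Real.cos (α n + (k n : ℝ) * ω - α 0) := by
    intro n h1 h2
    have := key n h1 h2
    have heq : α n + (k n : ℝ) * ω - α 0 = (k n : ℝ) * ω - (α 0 - α n) := by ring
    rw [heq]
    exact cos_ge_of_angle_norm_le hπK_le this
  -- Step 3 : real part and modulus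
  set z : ℂ := (β 0 : ℂ) * Complex.exp (Complex.I * (α 0 : ℝ)) +
      ∑ n ∈ Finset.Icc 1 N, (β n : ℂ) * Complex.exp (Complex.I * ((α n : ℝ) + (k n : ℝ) * ω))
    with hz
  set w : ℂ := Complex.exp (-(Complex.I * (α 0 : ℝ))) with hw
  have hwabs : ‖w‖ = 1 := by
    rw [hw, Complex.norm_exp]
    simp
  have hre : (w * z).re = β 0 + ∑ n ∈ Finset.Icc 1 N,
      β n * Real.cos (α n + (k n : ℝ) * ω - α 0) := by
    rw [hz, hw, mul_add, Finset.mul_sum]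
    have hterm0 : Complex.exp (-(Complex.I * (α 0 : ℝ))) *
        ((β 0 : ℂ) * Complex.exp (Complex.I * (α 0 : ℝ))) = (β 0 : ℂ) := by
      rw [mul_comm, mul_assoc, ← Complex.exp_add]
      simp
    rw [hterm0]
    have hterms : ∀ n ∈ Finset.Icc 1 N,
        (Complex.exp (-(Complex.I * (α 0 : ℝ))) *
          ((β n : ℂ) * Complex.exp (Complex.I * ((α n : ℝ) + (k n : ℝ) * ω)))).re =
        β n * Real.cos (α n + (k n : ℝ) * ω - α 0) := by
      intro n hn
      rw [mul_comm, mul_assoc, ← Complex.exp_add]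
      have : Complex.I * ((α n : ℝ) + (k n : ℝ) * ω) + -(Complex.I * (α 0 : ℝ)) =
          ((α n + (k n : ℝ) * ω - α 0 : ℝ) : ℂ) * Complex.I := by
        push_cast
        ring
      rw [this, Complex.re_ofReal_mul, Complex.exp_ofReal_mul_I_re]
    rw [Complex.add_re]
    simp only [Complex.ofReal_re]
    congr 1
    rw [Complex.re_sum]
    exact Finset.sum_congr rfl hterms
  -- lower bound on the real part
  have hre_ge : β 0 + Real.cos (π / K) * ∑ n ∈ Finset.Icc 1 N, β n ≤ (w * z).re := by
    rw [hre]
    have : Real.cos (π / K) * ∑ n ∈ Finset.Icc 1 N, β n =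
        ∑ n ∈ Finset.Icc 1 N, Real.cos (π / K) * β n := by rw [Finset.mul_sum]
    rw [this]
    refine add_le_add_right (Finset.sum_le_sum ?_) _
    intro n hn
    rw [Finset.mem_Icc] at hn
    have hβn := (hβ n hn.2).le
    calc Real.cos (π / K) * β n ≤ Real.cos (α n + (k n : ℝ) * ω - α 0) * β n :=
          mul_le_mul_of_nonneg_right (hcos n hn.1 hn.2) hβn
      _ = β n * Real.cos (α n + (k n : ℝ) * ω - α 0) := by ring
  have habs : (w * z).re ≤ ‖z‖ := by
    calc (w * z).re ≤ ‖w * z‖ := Complex.re_le_norm _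
      _ = ‖w‖ * ‖z‖ := norm_mul _ _
      _ = ‖z‖ := by rw [hwabs, one_mul]
  have hlhs_nonneg : 0 ≤ β 0 + Real.cos (π / K) * ∑ n ∈ Finset.Icc 1 N, β n := by
    have hsum : 0 ≤ ∑ n ∈ Finset.Icc 1 N, β n :=
      Finset.sum_nonneg fun n hn => (hβ n (Finset.mem_Icc.mp hn).2).le
    have := (hβ 0 (by omega)).le
    positivity
  have hfinal : β 0 + Real.cos (π / K) * ∑ n ∈ Finset.Icc 1 N, β n ≤ ‖z‖ :=
    le_trans hre_ge habs
  apply mul_le_mul_of_nonneg_left _ (by positivity)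
  exact pow_le_pow_left₀ hlhs_nonneg hfinal 2
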